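/- Let R = [[A,B,0],[C,D,0],[E,F,1]] with A,B,C,D,E,F natural numbers, A·D − B·C = 1, E < A + C, F < B + D, and −C ≤ C·F − D·E < D. Then the inverse of R (over ℤ) equals [[D,−B,0],[−C,A,0],[F·C−E·D, B·E−F·A, 1]], and R maps the cone C₁ = {(x,y,z) : 0 ≤ x, 0 ≤ y, 0 ≤ z ≤ x+y} into itself while R⁻¹ maps C₂ = {(x,y,z) : 0 ≤ x, y ≤ 0, y ≤ z ≤ x} into itself. -/

import Mathlib

/-!
Both matrices have last column `(0, 0, 1)`, so invariance of the two polyhedral cones reduces to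
linear inequalities between the entries. For `R` these are `E < A + C` and `F < B + D`. For `R⁻¹`
they are the two bounds on `C * F - D * E` together with `B * E - F * A + 1 ≤ A` and
`-B ≤ B * E - F * A`; after multiplying by `D ≥ 0` and using `A * D - B * C = 1`, these two
reduce to the bounds on `C * F - D * E` (with `0 ≤ F` and `F < B + D`).
-/

open Matrix Set

section LowerBlock

variable {α : Type*}

theorem mulVec_fin_three_of_col_two [NonAssocSemiring α] (a b c d e f : α) (v : Fin 3 → α) :
    !![a, b, 0; c, d, 0; e, f, 1] *ᵥ v =
      ![a * v 0 + b * v 1, c * v 0 + d * v 1, e * v 0 + f * v 1 + v 2] := by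
  ext i
  fin_cases i <;> simp [mulVec, dotProduct, Fin.sum_univ_succ, add_assoc]

theorem inv_fin_three_of_col_two [CommRing α] {a b c d : α} (e f : α) (hdet : a * d - b * c = 1) :
    !![a, b, 0; c, d, 0; e, f, 1]⁻¹ = !![d, -b, 0; -c, a, 0; f * c - e * d, b * e - f * a, 1] := by
  refine inv_eq_right_inv ?_
  rw [mul_fin_three, one_fin_three]
  grind

end LowerBlock

section Cones

variable (𝕜 : Type*) [CommRing 𝕜] [LinearOrder 𝕜] [IsStrictOrderedRing 𝕜]

def cone₁ : Set (Fin 3 → 𝕜) := {v | 0 ≤ v 0 ∧ 0 ≤ v 1 ∧ 0 ≤ v 2 ∧ v 2 ≤ v 0 + v 1}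

def cone₂ : Set (Fin 3 → 𝕜) := {v | 0 ≤ v 0 ∧ v 1 ≤ 0 ∧ v 1 ≤ v 2 ∧ v 2 ≤ v 0}

variable {𝕜}

theorem mapsTo_cone₁ {a b c d e f : 𝕜} (ha : 0 ≤ a) (hb : 0 ≤ b) (hc : 0 ≤ c) (hd : 0 ≤ d)
    (he : 0 ≤ e) (hf : 0 ≤ f) (hace : e + 1 ≤ a + c) (hbdf : f + 1 ≤ b + d) :
    MapsTo (!![a, b, 0; c, d, 0; e, f, 1] *ᵥ ·) (cone₁ 𝕜) (cone₁ 𝕜) := by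
  rintro v ⟨hx, hy, hz, hzxy⟩
  simp only [cone₁, mem_ofPred_eq, mulVec_fin_three_of_col_two, cons_val]
  refine ⟨add_nonneg (mul_nonneg ha hx) (mul_nonneg hb hy),
    add_nonneg (mul_nonneg hc hx) (mul_nonneg hd hy),
    add_nonneg (add_nonneg (mul_nonneg he hx) (mul_nonneg hf hy)) hz, ?_⟩
  linarith [mul_le_mul_of_nonneg_right hace hx, mul_le_mul_of_nonneg_right hbdf hy]

theorem mapsTo_cone₂ {a b c d e f : 𝕜} (ha : 0 ≤ a) (hb : b ≤ 0) (hc : c ≤ 0) (hd : 0 ≤ d)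
    (hce : c ≤ e) (hea : e + 1 ≤ a) (hfd : f + 1 ≤ d) (hbf : b ≤ f) :
    MapsTo (!![a, b, 0; c, d, 0; e, f, 1] *ᵥ ·) (cone₂ 𝕜) (cone₂ 𝕜) := by
  rintro v ⟨hx, hy, hyz, hzx⟩
  simp only [cone₂, mem_ofPred_eq, mulVec_fin_three_of_col_two, cons_val]
  refine ⟨?_, ?_, ?_, ?_⟩
  · linarith [mul_nonneg ha hx, mul_nonneg_of_nonpos_of_nonpos hb hy]
  · linarith [mul_nonpos_of_nonpos_of_nonneg hc hx, mul_nonpos_of_nonneg_of_nonpos hd hy]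
  · linarith [mul_le_mul_of_nonneg_right hce hx, mul_le_mul_of_nonpos_right hfd hy]
  · linarith [mul_le_mul_of_nonneg_right hea hx, mul_le_mul_of_nonpos_right hbf hy]

end Cones

section Unimodular

variable {a b c d e f : ℤ}

theorem add_one_le_of_det_eq_one (hdet : a * d - b * c = 1) (hb : 0 ≤ b) (hd : 0 ≤ d) (hf : 0 ≤ f)
    (h : -c ≤ c * f - d * e) : b * e - f * a + 1 ≤ a := by
  have hpos : 0 < d * (a - (b * e - f * a)) := by
    have key : d * (a - (b * e - f * a)) = (f + 1) + b * (c * f - d * e + c) := by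
      linear_combination (f + 1) * hdet
    rw [key]
    linarith [mul_nonneg hb (by linarith : 0 ≤ c * f - d * e + c)]
  linarith [pos_of_mul_pos_right hpos hd]

theorem neg_le_of_det_eq_one (hdet : a * d - b * c = 1) (hb : 0 ≤ b) (hd : 0 ≤ d)
    (hf : f < b + d) (h : c * f - d * e < d) : -b ≤ b * e - f * a := by
  have hpos : 0 < d * (b * e - f * a + b + 1) := by
    have key : d * (b * e - f * a + b + 1) = (b + d - f) + b * (d - 1 - (c * f - d * e)) := by
      linear_combination (-f) * hdet
    rw [key]
    linarith [mul_nonneg hb (by linarith : 0 ≤ d - 1 - (c * f - d * e))]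
  linarith [pos_of_mul_pos_right hpos hd]

end Unimodular

theorem stmt_7 (A B C D E F : ℕ)
    (hdet : (A : ℤ) * D - B * C = 1)
    (hE : (E : ℤ) < A + C) (hF : (F : ℤ) < B + D)
    (h1 : -(C : ℤ) ≤ C * F - D * E) (h2 : (C : ℤ) * F - D * E < D)
    (R : Matrix (Fin 3) (Fin 3) ℤ)
    (hR : R = !![(A:ℤ), B, 0; C, D, 0; E, F, 1]) :
    R⁻¹ = !![(D:ℤ), -(B:ℤ), 0; -(C:ℤ), A, 0; (F:ℤ)*C - E*D, (B:ℤ)*E - F*A, 1] ∧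
    (∀ v : Fin 3 → ℝ, (0 ≤ v 0 ∧ 0 ≤ v 1 ∧ 0 ≤ v 2 ∧ v 2 ≤ v 0 + v 1) →
      (0 ≤ (R.map (Int.cast : ℤ → ℝ)).mulVec v 0 ∧ 0 ≤ (R.map (Int.cast : ℤ → ℝ)).mulVec v 1 ∧
       0 ≤ (R.map (Int.cast : ℤ → ℝ)).mulVec v 2 ∧
       (R.map (Int.cast : ℤ → ℝ)).mulVec v 2 ≤ (R.map (Int.cast : ℤ → ℝ)).mulVec v 0 + (R.map (Int.cast : ℤ → ℝ)).mulVec v 1)) ∧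
    (∀ v : Fin 3 → ℝ, (0 ≤ v 0 ∧ v 1 ≤ 0 ∧ v 1 ≤ v 2 ∧ v 2 ≤ v 0) →
      (0 ≤ ((R⁻¹).map (Int.cast : ℤ → ℝ)).mulVec v 0 ∧ ((R⁻¹).map (Int.cast : ℤ → ℝ)).mulVec v 1 ≤ 0 ∧
       ((R⁻¹).map (Int.cast : ℤ → ℝ)).mulVec v 1 ≤ ((R⁻¹).map (Int.cast : ℤ → ℝ)).mulVec v 2 ∧
       ((R⁻¹).map (Int.cast : ℤ → ℝ)).mulVec v 2 ≤ ((R⁻¹).map (Int.cast : ℤ → ℝ)).mulVec v 0)) := by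
  have hinv : R⁻¹ = !![(D:ℤ), -(B:ℤ), 0; -(C:ℤ), A, 0; (F:ℤ)*C - E*D, (B:ℤ)*E - F*A, 1] :=
    hR ▸ inv_fin_three_of_col_two _ _ hdet
  have hRℝ : R.map (Int.cast : ℤ → ℝ) = !![(A:ℝ), B, 0; C, D, 0; E, F, 1] := by
    subst hR; ext i j; fin_cases i <;> fin_cases j <;> simp
  have hRinvℝ : (R⁻¹).map (Int.cast : ℤ → ℝ) =
      !![(D:ℝ), -(B:ℝ), 0; -(C:ℝ), A, 0; (F:ℝ)*C - E*D, (B:ℝ)*E - F*A, 1] := by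
    rw [hinv]; ext i j; fin_cases i <;> fin_cases j <;> simp
  have hBE : (B:ℤ) * E - F * A + 1 ≤ A :=
    add_one_le_of_det_eq_one hdet (by positivity) (by positivity) (by positivity) h1
  have hFA : -(B:ℤ) ≤ B * E - F * A := neg_le_of_det_eq_one hdet (by positivity) (by positivity) hF h2
  refine ⟨hinv, ?_, ?_⟩
  · rw [hRℝ]
    exact fun v hv ↦ mapsTo_cone₁ (by positivity) (by positivity) (by positivity) (by positivity)
      (by positivity) (by positivity) (by exact_mod_cast hE) (by exact_mod_cast hF) hv
  · rw [hRinvℝ]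
    exact fun v hv ↦ mapsTo_cone₂ (by positivity) (by simp) (by simp) (by positivity)
      (by exact_mod_cast (by linarith : -(C:ℤ) ≤ F * C - E * D))
      (by exact_mod_cast (by linarith : (F:ℤ) * C - E * D + 1 ≤ D))
      (by exact_mod_cast hBE) (by exact_mod_cast hFA) hv
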